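/- arXiv:1909.13402 — 4 statements merged into one kernel-verified Lean document; each statement's English description precedes it below -/
import Mathlib

section
/- Let (s_k)_{k≥0} be a sequence of p×p complex matrices and C a fixed mp×mp complex matrix such that the block row vectors satisfy (s_{j+1}, …, s_{j+m}) = (s_j, …, s_{j+m-1})·C for all j ≥ 0 (i.e., H_{j+1,m-1} = H_{j,m-1}·C in block-Hankel notation, acting on the last block-column shift). If the block Hankel matrices H_{0,m-1} = [s_{j+k}]_{j,k=0}^{m-1} and H_{1,m-1} = [s_{j+k+1}]_{j,k=0}^{m-1} are Hermitian, then every matrix s_k for k ≥ 2m is Hermitian, because H_{2k+l,m-1} = (C^k)* H_{l,m-1} C^k for all k, l ≥ 0. -/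
/-! `H 1 = H 0 * C` and the self-adjointness of `H 0` and `H 1` give `Cᴴ * H 0 = H 1`, so
`Cᴴ` shifts the sequence from the left just as `C` does from the right. Hence
`H (2k+l) = (Cᵏ)ᴴ * H l * Cᵏ`, every `H j` is a congruence transform of `H 0` or `H 1` and
so Hermitian, and `s j` is the top-left block of `H j`. -/

open Matrix

section ShiftSequence

variable {R : Type*} [Monoid R] {h : ℕ → R} {c : R}

theorem add_eq_mul_pow_of_succ_eq_mul (hrec : ∀ j, h (j + 1) = h j * c) (j k : ℕ) :
    h (j + k) = h j * c ^ k := by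
  induction k with
  | zero => simp
  | succ k ih => rw [← add_assoc, hrec, ih, mul_assoc, ← pow_succ]

variable [StarMul R]

theorem star_mul_eq_succ_of_succ_eq_mul (hrec : ∀ j, h (j + 1) = h j * c)
    (h0 : IsSelfAdjoint (h 0)) (h1 : IsSelfAdjoint (h 1)) (j : ℕ) :
    star c * h j = h (j + 1) := by
  induction j with
  | zero => rw [← h1.star_eq, hrec 0, star_mul, h0.star_eq]
  | succ j ih => rw [hrec j, ← mul_assoc, ih, ← hrec]

theorem star_pow_mul_eq_add_of_succ_eq_mul (hrec : ∀ j, h (j + 1) = h j * c)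
    (h0 : IsSelfAdjoint (h 0)) (h1 : IsSelfAdjoint (h 1)) (k j : ℕ) :
    star (c ^ k) * h j = h (j + k) := by
  induction k generalizing j with
  | zero => simp
  | succ k ih =>
    rw [pow_succ, star_mul, mul_assoc, ih, star_mul_eq_succ_of_succ_eq_mul hrec h0 h1, add_assoc]

theorem eq_star_pow_mul_mul_pow_of_succ_eq_mul (hrec : ∀ j, h (j + 1) = h j * c)
    (h0 : IsSelfAdjoint (h 0)) (h1 : IsSelfAdjoint (h 1)) (k l : ℕ) :
    h (2 * k + l) = star (c ^ k) * h l * c ^ k := by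
  rw [star_pow_mul_eq_add_of_succ_eq_mul hrec h0 h1, ← add_eq_mul_pow_of_succ_eq_mul hrec]
  congr 1
  omega

theorem isSelfAdjoint_of_succ_eq_mul (hrec : ∀ j, h (j + 1) = h j * c)
    (h0 : IsSelfAdjoint (h 0)) (h1 : IsSelfAdjoint (h 1)) (j : ℕ) :
    IsSelfAdjoint (h j) := by
  rw [← Nat.div_add_mod j 2, eq_star_pow_mul_mul_pow_of_succ_eq_mul hrec h0 h1]
  refine IsSelfAdjoint.conjugate' ?_ _
  rcases Nat.mod_two_eq_zero_or_one j with hj | hj <;> rw [hj]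
  exacts [h0, h1]

end ShiftSequence

theorem Matrix.IsHermitian.of_blockHankel {α n : Type*} [Star α] {m : ℕ} (hm : 0 < m)
    {s : ℕ → Matrix n n α} {j : ℕ}
    (hH : (of fun a b : Fin m × n => s (j + (a.1 : ℕ) + (b.1 : ℕ)) a.2 b.2).IsHermitian) :
    (s j).IsHermitian := by
  ext x y
  simpa using congr_fun₂ hH.eq (⟨0, hm⟩, x) (⟨0, hm⟩, y)

/-- If the block-Hankel matrices `H j = [s (j+a+b)]` of a block sequence satisfy the
companion recursion `H (j+1) = H j * C` and `H 0`, `H 1` are Hermitian, then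
`H (2k+l) = (Cᵏ)ᴴ * H l * Cᵏ` for all `k, l`, and every `s k` with `k ≥ 2m` is Hermitian. -/
theorem stmt2 (p m : ℕ) (hm : 0 < m) (s : ℕ → Matrix (Fin p) (Fin p) ℂ)
    (C : Matrix (Fin m × Fin p) (Fin m × Fin p) ℂ)
    (H : ℕ → Matrix (Fin m × Fin p) (Fin m × Fin p) ℂ)
    (hH : ∀ j, H j = Matrix.of fun a b => s (j + (a.1 : ℕ) + (b.1 : ℕ)) a.2 b.2)
    (hrec : ∀ j, H (j + 1) = H j * C)
    (h0 : (H 0).IsHermitian) (h1 : (H 1).IsHermitian) :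
    (∀ k l, H (2 * k + l) = (C ^ k)ᴴ * H l * C ^ k) ∧
      ∀ k, 2 * m ≤ k → (s k).IsHermitian := by
  rw [isHermitian_iff_isSelfAdjoint] at h0 h1
  refine ⟨eq_star_pow_mul_mul_pow_of_succ_eq_mul hrec h0 h1, fun k _ => ?_⟩
  have hHk := isSelfAdjoint_of_succ_eq_mul hrec h0 h1 k
  rw [← isHermitian_iff_isSelfAdjoint, hH k] at hHk
  exact hHk.of_blockHankel hm
end

section
/- Let F(z) = I_p z² + A₁ z + A₂ be a monic quadratic p×p matrix polynomial where A₁ and A₂ are positive definite Hermitian matrices. Then F is Hurwitz stable: every λ ∈ ℂ with det F(λ) = 0 satisfies Re λ < 0. -/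
open Matrix
open scoped ComplexOrder

/-!
If `F(λ) v = 0` with `v ≠ 0`, then `λ` is a root of the scalar quadratic
`a z² + b z + c` with `a = v* v`, `b = v* A₁ v`, `c = v* A₂ v`, all positive reals.
Such a quadratic has no root with `Re z ≥ 0`: its imaginary part `y (2 a x + b)`
forces `y = 0`, and then `a x² + b x + c > 0`.
-/

theorem Complex.re_lt_zero_of_quadratic_eq_zero {a b c : ℝ} (ha : 0 < a) (hb : 0 < b)
    (hc : 0 < c) {z : ℂ} (hz : a * z ^ 2 + b * z + c = 0) : z.re < 0 := by
  have hre := congrArg Complex.re hz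
  have him := congrArg Complex.im hz
  simp only [Complex.add_re, Complex.add_im, Complex.mul_re, Complex.mul_im, pow_two,
    Complex.ofReal_re, Complex.ofReal_im, Complex.zero_re, Complex.zero_im] at hre him
  by_contra! hx
  have him' : z.im * (2 * a * z.re + b) = 0 := by linear_combination him
  have hy : z.im = 0 :=
    (mul_eq_zero.mp him').resolve_right (by positivity)
  rw [hy] at hre
  nlinarith

theorem Matrix.dotProduct_mulVec_quadratic {n : Type*} [Fintype n]
    (A₀ A₁ A₂ : Matrix n n ℂ) (z : ℂ) (v : n → ℂ) :
    star v ⬝ᵥ ((z ^ 2 • A₀ + z • A₁ + A₂) *ᵥ v) =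
      star v ⬝ᵥ (A₀ *ᵥ v) * z ^ 2 + star v ⬝ᵥ (A₁ *ᵥ v) * z + star v ⬝ᵥ (A₂ *ᵥ v) := by
  simp only [add_mulVec, smul_mulVec, dotProduct_add, dotProduct_smul, smul_eq_mul, mul_comm]

theorem Matrix.re_lt_zero_of_det_quadratic_eq_zero {n : Type*} [Fintype n] [DecidableEq n]
    {A₀ A₁ A₂ : Matrix n n ℂ} (h₀ : A₀.PosDef) (h₁ : A₁.PosDef) (h₂ : A₂.PosDef) {z : ℂ}
    (hz : (z ^ 2 • A₀ + z • A₁ + A₂).det = 0) : z.re < 0 := by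
  obtain ⟨v, hv, hFv⟩ := exists_mulVec_eq_zero_iff.mpr hz
  obtain ⟨a, ha, hva⟩ := RCLike.pos_iff_exists_ofReal.mp (h₀.dotProduct_mulVec_pos hv)
  obtain ⟨b, hb, hvb⟩ := RCLike.pos_iff_exists_ofReal.mp (h₁.dotProduct_mulVec_pos hv)
  obtain ⟨c, hc, hvc⟩ := RCLike.pos_iff_exists_ofReal.mp (h₂.dotProduct_mulVec_pos hv)
  refine Complex.re_lt_zero_of_quadratic_eq_zero ha hb hc ?_
  have := dotProduct_mulVec_quadratic A₀ A₁ A₂ z v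
  rw [hFv, dotProduct_zero, ← hva, ← hvb, ← hvc] at this
  exact this.symm

/-- A monic quadratic matrix polynomial `z² I + z A₁ + A₂` with positive definite
Hermitian coefficients is Hurwitz stable. -/
theorem stmt5 (p : ℕ) (A₁ A₂ : Matrix (Fin p) (Fin p) ℂ)
    (h1 : A₁.PosDef) (h2 : A₂.PosDef) :
    ∀ lam : ℂ,
      (lam ^ 2 • (1 : Matrix (Fin p) (Fin p) ℂ) + lam • A₁ + A₂).det = 0 → lam.re < 0 :=
  fun _ ↦ re_lt_zero_of_det_quadratic_eq_zero PosDef.one h1 h2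
end

section
/- Let F be a monic p×p complex matrix polynomial with even part F_e and odd part F_o (F(z) = F_e(z²) + z F_o(z²)). If F is Hurwitz stable, then every greatest right common divisor of the polynomials F_e(−z²) and z·F_o(−z²) is unimodular, i.e., has empty spectrum. -/
open Polynomial Matrix

/-- `L` is a right divisor of `F`, i.e. `F = M · L` for some matrix polynomial `M`. -/
def IsRightDivisor (p : ℕ) (L F : Matrix (Fin p) (Fin p) (Polynomial ℂ)) : Prop :=
  ∃ M, F = M * L

/-- `L` is a greatest right common divisor of `F` and `G`. -/
def IsGRCD (p : ℕ) (F G L : Matrix (Fin p) (Fin p) (Polynomial ℂ)) : Prop :=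
  IsRightDivisor p L F ∧ IsRightDivisor p L G ∧
    ∀ L', IsRightDivisor p L' F → IsRightDivisor p L' G → IsRightDivisor p L' L

/-!
If `z₀` is a zero of `det G`, some `v ≠ 0` satisfies `G(z₀) v = 0`, hence
`A(z₀) v = B(z₀) v = 0` for the right multiples `A = F_e(-z²)` and `B = z F_o(-z²)` of `G`.
For `c = ± i` we have `(c z₀)² = -z₀²`, so `F(c z₀) = A(z₀) + c B(z₀)` and `F(c z₀) v = 0`.
Thus both `i z₀` and `-i z₀` are zeros of `det F`, and their real parts, `∓ Im z₀`, cannot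
both be negative.
-/

section MatrixPolynomial

variable {R : Type*} [CommRing R] {n : Type*} [Fintype n]

theorem Matrix.mulVec_map_eval_mul_eq_zero {m : Type*} [Fintype m] (M : Matrix m n R[X])
    (L : Matrix n n R[X]) {z : R} {v : n → R} (hv : L.map (eval z) *ᵥ v = 0) :
    (M * L).map (eval z) *ᵥ v = 0 := by
  rw [show (M * L).map (eval z) = M.map (eval z) * L.map (eval z) from
      Matrix.map_mul (f := evalRingHom z), ← mulVec_mulVec, hv, mulVec_zero]

variable [DecidableEq n]

theorem Matrix.eval_det_eq_det_map_eval (M : Matrix n n R[X]) (z : R) :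
    M.det.eval z = (M.map (eval z)).det :=
  RingHom.map_det (evalRingHom z) M

theorem Matrix.eval_det_eq_zero_iff_exists_mulVec_map_eval_eq_zero [IsDomain R]
    (M : Matrix n n R[X]) (z : R) :
    M.det.eval z = 0 ↔ ∃ v ≠ 0, M.map (eval z) *ᵥ v = 0 := by
  rw [eval_det_eq_det_map_eval, exists_mulVec_eq_zero_iff]

end MatrixPolynomial

theorem Polynomial.eval_mul_even_add_odd_of_sq_eq_neg_one {R : Type*} [CommRing R]
    (fe fo : R[X]) {c : R} (hc : c ^ 2 = -1) (z : R) :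
    (fe.comp (X ^ 2) + X * fo.comp (X ^ 2)).eval (c * z) =
      (fe.comp (-X ^ 2)).eval z + c * (X * fo.comp (-X ^ 2)).eval z := by
  have hsq : (c * z) ^ 2 = -z ^ 2 := by rw [mul_pow, hc, neg_one_mul]
  simp only [eval_add, eval_mul, eval_comp, eval_pow, eval_neg, eval_X, hsq]
  ring

theorem Matrix.map_eval_mul_even_add_odd_of_sq_eq_neg_one {R : Type*} [CommRing R]
    {n : Type*} {F Fe Fo : Matrix n n R[X]}
    (hsplit : ∀ i j, F i j = (Fe i j).comp (X ^ 2) + X * (Fo i j).comp (X ^ 2))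
    {c : R} (hc : c ^ 2 = -1) (z : R) :
    F.map (eval (c * z)) =
      (Matrix.of fun i j => (Fe i j).comp (-(X ^ 2))).map (eval z) +
        c • (Matrix.of fun i j => X * (Fo i j).comp (-(X ^ 2))).map (eval z) := by
  ext i j
  simp only [map_apply, add_apply, smul_apply, of_apply, smul_eq_mul, hsplit i j,
    eval_mul_even_add_odd_of_sq_eq_neg_one _ _ hc]

theorem eval_det_eq_zero_of_isRightDivisor_of_sq_eq_neg_one {p : ℕ}
    {F Fe Fo G : Matrix (Fin p) (Fin p) ℂ[X]}
    (hGe : IsRightDivisor p G (Matrix.of fun i j => (Fe i j).comp (-(X ^ 2))))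
    (hGo : IsRightDivisor p G (Matrix.of fun i j => X * (Fo i j).comp (-(X ^ 2))))
    (hsplit : ∀ i j, F i j = (Fe i j).comp (X ^ 2) + X * (Fo i j).comp (X ^ 2))
    {z : ℂ} (hz : G.det.eval z = 0) {c : ℂ} (hc : c ^ 2 = -1) :
    F.det.eval (c * z) = 0 := by
  obtain ⟨MA, hMA⟩ := hGe
  obtain ⟨MB, hMB⟩ := hGo
  obtain ⟨v, hv0, hv⟩ := (eval_det_eq_zero_iff_exists_mulVec_map_eval_eq_zero G z).mp hz
  refine (eval_det_eq_zero_iff_exists_mulVec_map_eval_eq_zero F _).mpr ⟨v, hv0, ?_⟩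
  rw [map_eval_mul_even_add_odd_of_sq_eq_neg_one hsplit hc, add_mulVec, smul_mulVec, hMA, hMB,
    mulVec_map_eval_mul_eq_zero MA G hv, mulVec_map_eval_mul_eq_zero MB G hv, smul_zero,
    add_zero]

theorem stmt12_general (p : ℕ) (F Fe Fo : Matrix (Fin p) (Fin p) (Polynomial ℂ))
    (hsplit : ∀ i j, F i j = (Fe i j).comp (X ^ 2) + X * (Fo i j).comp (X ^ 2))
    (hstable : ∀ z : ℂ, (F.det).eval z = 0 → z.re < 0)
    (G : Matrix (Fin p) (Fin p) (Polynomial ℂ))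
    (hG : IsGRCD p (Matrix.of fun i j => (Fe i j).comp (-(X ^ 2)))
        (Matrix.of fun i j => X * (Fo i j).comp (-(X ^ 2))) G) :
    ∀ z : ℂ, (G.det).eval z ≠ 0 := by
  intro z hz
  have hdetF {c : ℂ} (hc : c ^ 2 = -1) : F.det.eval (c * z) = 0 :=
    eval_det_eq_zero_of_isRightDivisor_of_sq_eq_neg_one hG.1 hG.2.1 hsplit hz hc
  have hI := hstable _ (hdetF Complex.I_sq)
  have hnegI := hstable _ (hdetF (by rw [neg_sq, Complex.I_sq]))
  simp only [Complex.mul_re, Complex.I_re, Complex.I_im, Complex.neg_re, Complex.neg_im] at hI hnegI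
  linarith

/-- If a monic matrix polynomial `F(z) = F_e(z²) + z F_o(z²)` is Hurwitz stable, then every
GRCD of `F_e(-z²)` and `z F_o(-z²)` is unimodular (has empty spectrum). -/
theorem stmt12 (p n : ℕ) (F Fe Fo : Matrix (Fin p) (Fin p) (Polynomial ℂ))
    (hdeg : ∀ i j, (F i j).natDegree ≤ n)
    (hmonic : (Matrix.of fun i j => (F i j).coeff n) = (1 : Matrix (Fin p) (Fin p) ℂ))
    (hsplit : ∀ i j, F i j = (Fe i j).comp (X ^ 2) + X * (Fo i j).comp (X ^ 2))
    (hstable : ∀ z : ℂ, (F.det).eval z = 0 → z.re < 0)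
    (G : Matrix (Fin p) (Fin p) (Polynomial ℂ))
    (hG : IsGRCD p (Matrix.of fun i j => (Fe i j).comp (-(X ^ 2)))
        (Matrix.of fun i j => X * (Fo i j).comp (-(X ^ 2))) G) :
    ∀ z : ℂ, (G.det).eval z ≠ 0 :=
  stmt12_general p F Fe Fo hsplit hstable G hG
end

section
/- Let A be a Hermitian matrix of size (n+m)×(n+m) in block form [[P,Q],[Q*,R]] with P an n×n invertible Hermitian block. Then the inertia of A equals the inertia of P plus the inertia of the Schur complement S = R − Q* P⁻¹ Q: π(A) = π(P) + π(S), ν(A) = ν(P) + ν(S), δ(A) = δ(P) + δ(S) (Haynsworth inertia additivity). -/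
/-!
Eliminating the off-diagonal block by the unitriangular `E = [[1, P⁻¹Q], [0, 1]]` gives
`A = Eᴴ (P ⊕ S) E`, and diagonalizing `P` and `S` unitarily shows that `A` is congruent to the
real diagonal matrix `diag(eig P, eig S)`. By Sylvester's law of inertia congruent diagonal
matrices have the same numbers of positive and of negative entries, which gives `π` and `ν`;
`δ` follows by counting, since `δ(P) = 0`. Sylvester's law is Mathlib's, for real quadratic
forms: `x ↦ Re (xᴴ M x)` on `ℂᵏ` viewed as a real space, where each complex coordinate
contributes two real squares, so all signatures are doubled.
-/

open Matrix Finset QuadraticMap QuadraticForm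

lemma Set.ncard_sigma_fin_setOf_fst {k : Type*} [Fintype k] (n : ℕ) (p : k → Prop)
    [DecidablePred p] : {q : Σ _ : k, Fin n | p q.1}.ncard = n * #{i | p i} := by
  rw [Set.ncard_eq_toFinset_card']
  have : ({q | p q.1} : Finset (Σ _ : k, Fin n)) =
      ({i | p i} : Finset k).sigma fun _ => Finset.univ := by
    ext; simp
  simp [this, mul_comm]

lemma Finset.card_filter_sumElim {k l α : Type*} [Fintype k] [Fintype l] (p : α → Prop)
    [DecidablePred p] (a : k → α) (b : l → α) :
    #{i | p (Sum.elim a b i)} = #{i | p (a i)} + #{i | p (b i)} := by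
  simp only [card_filter, Fintype.sum_sum_type, Sum.elim_inl, Sum.elim_inr]
  rfl

lemma Finset.card_pos_add_card_neg_add_card_zero {k α : Type*} [Fintype k] [Zero α]
    [LinearOrder α] (f : k → α) :
    #{i | 0 < f i} + #{i | f i < 0} + #{i | f i = 0} = Fintype.card k := by
  simp only [card_filter, ← sum_add_distrib, Fintype.card_eq_sum_ones]
  refine sum_congr rfl fun i _ => ?_
  rcases lt_trichotomy (f i) 0 with h | h | h
  · simp [h, lt_asymm h, ne_of_lt h]
  · simp [h]
  · simp [h, lt_asymm h, ne_of_gt h]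

namespace Matrix

variable {k l : Type*} [Fintype k] [Fintype l]

noncomputable def hermitianForm (M : Matrix k k ℂ) : QuadraticForm ℝ (k → ℂ) :=
  LinearMap.BilinMap.toQuadraticMap <| LinearMap.mk₂ ℝ (fun x y => (star x ⬝ᵥ M *ᵥ y).re)
    (fun x x' y => by simp [add_dotProduct])
    (fun c x y => by simp [smul_dotProduct, ← Complex.coe_smul])
    (fun x y y' => by simp [mulVec_add, dotProduct_add])
    (fun c x y => by simp [mulVec_smul, dotProduct_smul, ← Complex.coe_smul])

lemma hermitianForm_apply (M : Matrix k k ℂ) (x : k → ℂ) :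
    hermitianForm M x = (star x ⬝ᵥ M *ᵥ x).re := rfl

lemma hermitianForm_conjTranspose_mul_mul (E M : Matrix k k ℂ) (x : k → ℂ) :
    hermitianForm (Eᴴ * M * E) x = hermitianForm M (E *ᵥ x) := by
  rw [hermitianForm_apply, hermitianForm_apply, ← mulVec_mulVec, ← mulVec_mulVec,
    dotProduct_mulVec, ← star_mulVec]

variable [DecidableEq k] [DecidableEq l]

lemma fromBlocks_eq_conjTranspose_mul_fromBlocks_zero_mul {α : Type*} [CommRing α] [StarRing α]
    {P : Matrix k k α} (hP : P.IsHermitian) (hPu : IsUnit P) (Q : Matrix k l α)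
    (R : Matrix l l α) :
    fromBlocks P Q Qᴴ R = (fromBlocks 1 (P⁻¹ * Q) 0 1)ᴴ *
      fromBlocks P 0 0 (R - Qᴴ * P⁻¹ * Q) * fromBlocks 1 (P⁻¹ * Q) 0 1 := by
  have := hPu.invertible
  rw [fromBlocks_eq_of_invertible₁₁, invOf_eq_nonsing_inv, fromBlocks_conjTranspose]
  simp [conjTranspose_nonsing_inv, hP.eq]

lemma isUnit_fromBlocks_one_zero_one {α : Type*} [CommRing α] (B : Matrix k l α) :
    IsUnit (fromBlocks (1 : Matrix k k α) B 0 (1 : Matrix l l α)) := by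
  simp [isUnit_iff_isUnit_det]

lemma hermitianForm_diagonal (w : k → ℝ) (x : k → ℂ) :
    hermitianForm (diagonal fun i => (w i : ℂ)) x = ∑ i, w i * Complex.normSq (x i) := by
  simp only [hermitianForm_apply, dotProduct, mulVec_diagonal, Complex.re_sum]
  refine sum_congr rfl fun i _ => ?_
  simp [Complex.normSq_apply]
  ring

lemma equivalent_hermitianForm_conjTranspose_mul_mul {E : Matrix k k ℂ} (hE : IsUnit E)
    (M : Matrix k k ℂ) : (hermitianForm (Eᴴ * M * E)).Equivalent (hermitianForm M) :=
  let _ := hE.invertible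
  ⟨{ toLinearEquiv := (E.toLinearEquiv' ‹_›).restrictScalars ℝ
     map_app' := fun x => (hermitianForm_conjTranspose_mul_mul E M x).symm }⟩

lemma equivalent_hermitianForm_diagonal (w : k → ℝ) :
    (hermitianForm (diagonal fun i => (w i : ℂ))).Equivalent
      (weightedSumSquares ℝ fun p : Σ _ : k, Fin 2 => w p.1) :=
  ⟨{ toLinearEquiv := (Pi.basis fun _ : k => Complex.basisOneI).equivFun
     map_app' := fun x => by
       rw [hermitianForm_diagonal]
       simp [Fintype.sum_sigma, Fin.sum_univ_two, Complex.normSq_apply, mul_add] }⟩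

def IsCongrDiagonal (M : Matrix k k ℂ) (w : k → ℝ) : Prop :=
  ∃ E : Matrix k k ℂ, IsUnit E ∧ M = Eᴴ * diagonal (fun i => (w i : ℂ)) * E

namespace IsCongrDiagonal

variable {M : Matrix k k ℂ} {w : k → ℝ}

lemma sigPos_hermitianForm (h : M.IsCongrDiagonal w) :
    sigPos (hermitianForm M) = 2 * #{i | 0 < w i} := by
  obtain ⟨E, hE, rfl⟩ := h
  rw [(equivalent_hermitianForm_conjTranspose_mul_mul hE _).sigPos_eq,
    sigPos_of_equiv_weightedSumSquares (equivalent_hermitianForm_diagonal w)]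
  exact Set.ncard_sigma_fin_setOf_fst 2 fun i => 0 < w i

lemma sigNeg_hermitianForm (h : M.IsCongrDiagonal w) :
    sigNeg (hermitianForm M) = 2 * #{i | w i < 0} := by
  obtain ⟨E, hE, rfl⟩ := h
  rw [(equivalent_hermitianForm_conjTranspose_mul_mul hE _).sigNeg_eq,
    sigNeg_of_equiv_weightedSumSquares (equivalent_hermitianForm_diagonal w)]
  exact Set.ncard_sigma_fin_setOf_fst 2 fun i => w i < 0

theorem card_pos_eq {v : k → ℝ} (hw : M.IsCongrDiagonal w) (hv : M.IsCongrDiagonal v) :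
    #{i | 0 < w i} = #{i | 0 < v i} := by
  have := hw.sigPos_hermitianForm.symm.trans hv.sigPos_hermitianForm
  omega

theorem card_neg_eq {v : k → ℝ} (hw : M.IsCongrDiagonal w) (hv : M.IsCongrDiagonal v) :
    #{i | w i < 0} = #{i | v i < 0} := by
  have := hw.sigNeg_hermitianForm.symm.trans hv.sigNeg_hermitianForm
  omega

lemma conjTranspose_mul_mul (h : M.IsCongrDiagonal w) {E : Matrix k k ℂ} (hE : IsUnit E) :
    (Eᴴ * M * E).IsCongrDiagonal w := by
  obtain ⟨F, hF, rfl⟩ := h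
  exact ⟨F * E, hF.mul hE, by simp only [conjTranspose_mul, Matrix.mul_assoc]⟩

lemma fromBlocks {S : Matrix l l ℂ} {v : l → ℝ} (hM : M.IsCongrDiagonal w)
    (hS : S.IsCongrDiagonal v) : (fromBlocks M 0 0 S).IsCongrDiagonal (Sum.elim w v) := by
  obtain ⟨E, hE, rfl⟩ := hM
  obtain ⟨F, hF, rfl⟩ := hS
  refine ⟨Matrix.fromBlocks E 0 0 F, ?_, ?_⟩
  · rw [isUnit_iff_isUnit_det, det_fromBlocks_zero₂₁]
    exact (hE.map detMonoidHom).mul (hF.map detMonoidHom)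
  · have hdiag : (diagonal fun i => ((Sum.elim w v i : ℝ) : ℂ)) =
        Matrix.fromBlocks (diagonal fun i => (w i : ℂ)) 0 0 (diagonal fun i => (v i : ℂ)) := by
      rw [fromBlocks_diagonal]
      congr 1
      ext (i | i) <;> rfl
    rw [hdiag, fromBlocks_conjTranspose, fromBlocks_multiply, fromBlocks_multiply]
    simp

end IsCongrDiagonal

namespace IsHermitian

variable {M : Matrix k k ℂ}

lemma isCongrDiagonal_eigenvalues (hM : M.IsHermitian) : M.IsCongrDiagonal hM.eigenvalues := by
  refine ⟨star (hM.eigenvectorUnitary : Matrix k k ℂ), (Unitary.toUnits _)⁻¹.isUnit, ?_⟩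
  conv_lhs => rw [hM.spectral_theorem]
  simp only [Unitary.conjStarAlgAut_apply, star_eq_conjTranspose, conjTranspose_conjTranspose]
  rfl

lemma eigenvalues_ne_zero (hM : M.IsHermitian) (hMu : IsUnit M) (i : k) :
    hM.eigenvalues i ≠ 0 := by
  intro h
  have := (isUnit_iff_isUnit_det M).mp hMu |>.ne_zero
  rw [hM.det_eq_prod_eigenvalues, prod_eq_zero (mem_univ i) (by simp [h])] at this
  exact this rfl

end IsHermitian

end Matrix

/-- Haynsworth inertia additivity: for a Hermitian block matrix `A = [[P, Q], [Qᴴ, R]]`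
with `P` invertible Hermitian, the numbers of positive, negative and zero eigenvalues of
`A` are the sums of the corresponding counts for `P` and for the Schur complement
`S = R - Qᴴ P⁻¹ Q`. -/
theorem stmt15 (n m : ℕ) (P : Matrix (Fin n) (Fin n) ℂ) (Q : Matrix (Fin n) (Fin m) ℂ)
    (R : Matrix (Fin m) (Fin m) ℂ)
    (hA : (Matrix.fromBlocks P Q Qᴴ R).IsHermitian)
    (hP : P.IsHermitian) (hPinv : IsUnit P)
    (hS : (R - Qᴴ * P⁻¹ * Q).IsHermitian) :
    ((Finset.univ.filter fun i => 0 < hA.eigenvalues i).card =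
        (Finset.univ.filter fun i => 0 < hP.eigenvalues i).card +
          (Finset.univ.filter fun i => 0 < hS.eigenvalues i).card) ∧
      ((Finset.univ.filter fun i => hA.eigenvalues i < 0).card =
        (Finset.univ.filter fun i => hP.eigenvalues i < 0).card +
          (Finset.univ.filter fun i => hS.eigenvalues i < 0).card) ∧
      ((Finset.univ.filter fun i => hA.eigenvalues i = 0).card =
        (Finset.univ.filter fun i => hP.eigenvalues i = 0).card +
          (Finset.univ.filter fun i => hS.eigenvalues i = 0).card) := by
  have hAdiag :
      (fromBlocks P Q Qᴴ R).IsCongrDiagonal (Sum.elim hP.eigenvalues hS.eigenvalues) := by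
    rw [fromBlocks_eq_conjTranspose_mul_fromBlocks_zero_mul hP hPinv]
    exact (hP.isCongrDiagonal_eigenvalues.fromBlocks hS.isCongrDiagonal_eigenvalues)
      |>.conjTranspose_mul_mul (isUnit_fromBlocks_one_zero_one _)
  have hpos := (hA.isCongrDiagonal_eigenvalues.card_pos_eq hAdiag).trans
    (card_filter_sumElim ((0 : ℝ) < ·) _ _)
  have hneg := (hA.isCongrDiagonal_eigenvalues.card_neg_eq hAdiag).trans
    (card_filter_sumElim (· < (0 : ℝ)) _ _)
  have hPzero : #{i | hP.eigenvalues i = 0} = 0 := by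
    simp [hP.eigenvalues_ne_zero hPinv]
  have hAcard := card_pos_add_card_neg_add_card_zero hA.eigenvalues
  have hPcard := card_pos_add_card_neg_add_card_zero hP.eigenvalues
  have hScard := card_pos_add_card_neg_add_card_zero hS.eigenvalues
  simp only [Fintype.card_sum, Fintype.card_fin] at hAcard hPcard hScard
  exact ⟨hpos, hneg, by omega⟩
end
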